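/- arXiv:1807.05417 — 3 statements merged into one kernel-verified Lean document; each statement's English description precedes it below -/
import Mathlib

section
/- Let (X,d,m) be a metric measure space, p ∈ (1,∞), and let D be a pointwise local D-structure on (X,d,m). Then D is strongly local in the sense of Shanmugalingam: whenever u1, u2 ∈ S^p(X) satisfy u1 = u2 m-a.e. on some Borel set B ⊆ X, one has χ_B·g1 + χ_{X∖B}·g2 ∈ D[u2] for every g1 ∈ D[u1] and g2 ∈ D[u2]. -/
open Filter Set
open scoped ENNReal NNReal Topology

noncomputable section

namespace AxSob

variable {X : Type*} [MetricSpace X] [MeasurableSpace X]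

/-- The quantity `∫_B |u|^p dm`. -/
def lpIntOn (m : MeasureTheory.Measure X) (p : ℝ) (u : X → ℝ) (B : Set X) : ℝ≥0∞ :=
  ∫⁻ x in B, ENNReal.ofReal |u x| ^ p ∂m

/-- `u` belongs to `L^p(m)`. -/
def LpMem (m : MeasureTheory.Measure X) (p : ℝ) (u : X → ℝ) : Prop :=
  Measurable u ∧ lpIntOn m p u Set.univ < ∞

/-- `u` belongs to `L^p_loc(m)`: it is Borel and `p`-integrable on every bounded Borel set. -/
def LpLocMem (m : MeasureTheory.Measure X) (p : ℝ) (u : X → ℝ) : Prop :=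
  Measurable u ∧ ∀ B : Set X, MeasurableSet B → Bornology.IsBounded B → lpIntOn m p u B < ∞

/-- Convergence in `L^p(m)`. -/
def LpTendsto (m : MeasureTheory.Measure X) (p : ℝ) (g : ℕ → X → ℝ) (g₀ : X → ℝ) : Prop :=
  Tendsto (fun n => lpIntOn m p (fun x => g n x - g₀ x) Set.univ) atTop (𝓝 0)

/-- Convergence in `L^p_loc(m)`. -/
def LpLocTendsto (m : MeasureTheory.Measure X) (p : ℝ) (u : ℕ → X → ℝ) (u₀ : X → ℝ) : Prop :=
  ∀ B : Set X, MeasurableSet B → Bornology.IsBounded B →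
    Tendsto (fun n => lpIntOn m p (fun x => u n x - u₀ x) B) atTop (𝓝 0)

/-- `u` belongs to `L^∞(m)`. -/
def LinfMem (m : MeasureTheory.Measure X) (u : X → ℝ) : Prop :=
  Measurable u ∧ ∃ C : ℝ, ∀ᵐ x ∂m, |u x| ≤ C

/-- A `D`-structure (à la Gol'dshtein–Troyanov) on a metric measure space `(X, d, m)`,
with exponent `p`.  To every function `u` (thought of as an element of `L^p_loc(m)`) it
associates the family `D u` of its pseudo-gradients: non-negative Borel functions,
considered up to `m`-a.e. equality, satisfying the axioms A1–A5. -/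
structure DStructure (X : Type*) [MetricSpace X] [MeasurableSpace X]
    (m : MeasureTheory.Measure X) (p : ℝ) where
  D : (X → ℝ) → Set (X → ℝ)
  measurable_of_mem : ∀ u g, g ∈ D u → Measurable g
  nonneg_of_mem : ∀ u g, g ∈ D u → 0 ≤ g
  /-- `D` is defined on `L^p_loc(m)`, i.e. on `m`-a.e. equivalence classes. -/
  congr_ae : ∀ u v : X → ℝ, u =ᵐ[m] v → D u = D v
  /-- pseudo-gradients are considered up to `m`-a.e. equality. -/
  mem_congr_ae : ∀ u g h : X → ℝ, g ∈ D u → g =ᵐ[m] h → Measurable h → 0 ≤ h → h ∈ D u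
  /-- A1 (non triviality). -/
  axiomA1 : ∀ (u : X → ℝ) (K : ℝ≥0), LpLocMem m p u → 0 ≤ u → LipschitzWith K u →
    {x | 0 < u x}.indicator (fun _ => (K : ℝ)) ∈ D u
  /-- A2 (upper linearity). -/
  axiomA2 : ∀ (u₁ u₂ g₁ g₂ g : X → ℝ) (α₁ α₂ : ℝ),
    LpLocMem m p u₁ → LpLocMem m p u₂ → g₁ ∈ D u₁ → g₂ ∈ D u₂ →
    Measurable g → 0 ≤ g → (∀ᵐ x ∂m, |α₁| * g₁ x + |α₂| * g₂ x ≤ g x) →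
    g ∈ D (fun x => α₁ * u₁ x + α₂ * u₂ x)
  /-- A3 (Leibniz rule). -/
  axiomA3 : ∀ (u g φ : X → ℝ) (K : ℝ≥0) (M : ℝ),
    LpLocMem m p u → g ∈ D u → LipschitzWith K φ → (∀ x, |φ x| ≤ M) →
    (fun x => g x * M + (K : ℝ) * |u x|) ∈ D (fun x => φ x * u x)
  /-- A4 (lattice property). -/
  axiomA4 : ∀ u₁ u₂ g₁ g₂ : X → ℝ,
    LpLocMem m p u₁ → LpLocMem m p u₂ → g₁ ∈ D u₁ → g₂ ∈ D u₂ →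
    (fun x => max (g₁ x) (g₂ x)) ∈ D (fun x => max (u₁ x) (u₂ x)) ∧
    (fun x => max (g₁ x) (g₂ x)) ∈ D (fun x => min (u₁ x) (u₂ x))
  /-- A5 (completeness). -/
  axiomA5 : ∀ (u g : ℕ → X → ℝ) (u₀ g₀ : X → ℝ),
    (∀ n, LpLocMem m p (u n)) → (∀ n, g n ∈ D (u n)) → (∀ n, LpMem m p (g n)) →
    LpLocMem m p u₀ → Measurable g₀ → 0 ≤ g₀ →
    LpLocTendsto m p u u₀ → LpTendsto m p g g₀ → g₀ ∈ D u₀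

namespace DStructure

variable {m : MeasureTheory.Measure X} {p : ℝ}

/-- The `p`-Dirichlet energy `E_p(u|B) = inf { ∫_B g^p dm : g ∈ D[u] }`. -/
def energyOn (S : DStructure X m p) (u : X → ℝ) (B : Set X) : ℝ≥0∞ :=
  ⨅ (g : X → ℝ) (_ : g ∈ S.D u), lpIntOn m p g B

/-- The `p`-Dirichlet energy `E_p(u) = E_p(u|X)`. -/
def energy (S : DStructure X m p) (u : X → ℝ) : ℝ≥0∞ := S.energyOn u Set.univ

/-- The Sobolev class `S^p(X) = { u ∈ L^p_loc(m) : E_p(u) < ∞ }`. -/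
def SobolevClass (S : DStructure X m p) : Set (X → ℝ) :=
  {u | LpLocMem m p u ∧ S.energy u < ∞}

/-- The Sobolev space `W^{1,p}(X) = L^p(m) ∩ S^p(X)`. -/
def W1p (S : DStructure X m p) : Set (X → ℝ) :=
  {u | LpMem m p u ∧ S.energy u < ∞}

/-- The Sobolev norm `‖u‖ = (‖u‖_{L^p}^p + E_p(u))^{1/p}`. -/
def wNorm (S : DStructure X m p) (u : X → ℝ) : ℝ≥0∞ :=
  (lpIntOn m p u Set.univ + S.energy u) ^ (1 / p)

/-- `g` is the minimal pseudo-gradient of `u`: `g ∈ D[u] ∩ L^p(m)` and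
`∫ g^p dm = E_p(u)`. -/
def IsMinimalPG (S : DStructure X m p) (u g : X → ℝ) : Prop :=
  g ∈ S.D u ∧ LpMem m p g ∧ lpIntOn m p g Set.univ = S.energy u

/-- Property L1: if `u ∈ S^p(X)` is `m`-a.e. constant on a Borel set `B`, then
`E_p(u|B) = 0`. -/
def L1prop (S : DStructure X m p) : Prop :=
  ∀ u ∈ S.SobolevClass, ∀ B : Set X, MeasurableSet B →
    (∃ c : ℝ, ∀ᵐ x ∂(m.restrict B), u x = c) → S.energyOn u B = 0

/-- Property L2: if `u ∈ S^p(X)` is `m`-a.e. constant on a Borel set `B`, then the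
minimal pseudo-gradient vanishes `m`-a.e. on `B`. -/
def L2prop (S : DStructure X m p) : Prop :=
  ∀ u ∈ S.SobolevClass, ∀ B : Set X, MeasurableSet B →
    (∃ c : ℝ, ∀ᵐ x ∂(m.restrict B), u x = c) →
    ∀ g, S.IsMinimalPG u g → ∀ᵐ x ∂(m.restrict B), g x = 0

/-- Property L3: if `u ∈ S^p(X)` and `g ∈ D[u]`, then `χ_{u>0}·g ∈ D[u⁺]`. -/
def L3prop (S : DStructure X m p) : Prop :=
  ∀ u ∈ S.SobolevClass, ∀ g ∈ S.D u,
    {x | 0 < u x}.indicator g ∈ S.D (fun x => max (u x) 0)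

/-- Property L4: if `u ∈ S^p(X)` and `g₁, g₂ ∈ D[u]`, then `min{g₁,g₂} ∈ D[u]`. -/
def L4prop (S : DStructure X m p) : Prop :=
  ∀ u ∈ S.SobolevClass, ∀ g₁ ∈ S.D u, ∀ g₂ ∈ S.D u,
    (fun x => min (g₁ x) (g₂ x)) ∈ S.D u

/-- Property L5: the minimal pseudo-gradient satisfies `Du ≤ g` `m`-a.e. for every
`g ∈ D[u]`. -/
def L5prop (S : DStructure X m p) : Prop :=
  ∀ u ∈ S.SobolevClass, ∀ g, S.IsMinimalPG u g →
    ∀ h ∈ S.D u, ∀ᵐ x ∂m, g x ≤ h x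

/-- A pointwise local `D`-structure: it satisfies L1 and L5. -/
def PointwiseLocal (S : DStructure X m p) : Prop := S.L1prop ∧ S.L5prop

/-- Strong locality in the sense of Shanmugalingam. -/
def ShanmugalingamLocal (S : DStructure X m p) : Prop :=
  ∀ u₁ ∈ S.SobolevClass, ∀ u₂ ∈ S.SobolevClass, ∀ B : Set X, MeasurableSet B →
    (∀ᵐ x ∂(m.restrict B), u₁ x = u₂ x) →
    ∀ g₁ ∈ S.D u₁, ∀ g₂ ∈ S.D u₂,
      (fun x => B.indicator g₁ x + Bᶜ.indicator g₂ x) ∈ S.D u₂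

/-- Strong locality in the sense of Timoshin. -/
def TimoshinLocal (S : DStructure X m p) : Prop :=
  ∀ u₁ ∈ S.SobolevClass, ∀ u₂ ∈ S.SobolevClass,
    ∀ g₁ ∈ S.D u₁, ∀ g₂ ∈ S.D u₂,
      (fun x => {y | u₁ y < u₂ y}.indicator g₁ x + {y | u₂ y < u₁ y}.indicator g₂ x +
        {y | u₁ y = u₂ y}.indicator (fun y => min (g₁ y) (g₂ y)) x)
        ∈ S.D (fun x => min (u₁ x) (u₂ x))

end DStructure

end AxSob

/-!
Put `w = u₁ - u₂ ∈ S^p(X)`. As `w = 0` a.e. on `B`, L1 gives `E_p(w|B) = 0`, and since by L5 the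
minimal pseudo-gradient `Dw` lies below every element of `D[w]`, `Dw = 0` a.e. on `B`. As
`u₂ = u₁ - w`, axiom A2 gives `g₁ + Dw ∈ D[u₂]`; applying L5 to `u₂` yields `Du₂ ≤ g₁` a.e. on `B`
and `Du₂ ≤ g₂` a.e., so `χ_B g₁ + χ_{X∖B} g₂ ≥ Du₂` belongs to `D[u₂]` by A2.

Minimal pseudo-gradients exist because `1 < p < ∞`: `D[u]` is convex by A2, so the midpoints of a
minimizing sequence have energy at least `E_p(u)`; strict convexity of `t ↦ t ^ p`, made uniform
by compactness, turns this into the Cauchy property in `L^p`, and the limit lies in `D[u]` by A5.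
-/

namespace AxSob

open MeasureTheory

lemma tendsto_add_fst_snd {α : Type*} [TopologicalSpace α] [Add α] [ContinuousAdd α]
    {f : ℕ → α} {a : α} (h : Tendsto f atTop (𝓝 a)) :
    Tendsto (fun jl : ℕ × ℕ => f jl.1 + f jl.2) atTop (𝓝 (a + a)) := by
  rw [← prod_atTop_atTop_eq]
  exact (h.comp tendsto_fst).add (h.comp tendsto_snd)

def jensenGap (p a b : ℝ) : ℝ := (a ^ p + b ^ p) / 2 - ((a + b) / 2) ^ p

section JensenGap

variable {p a b : ℝ}

lemma jensenGap_comm (p a b : ℝ) : jensenGap p a b = jensenGap p b a := by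
  simp only [jensenGap, add_comm]

lemma jensenGap_eq (p a b : ℝ) :
    jensenGap p a b = (1 / 2 * a ^ p + 1 / 2 * b ^ p) - (1 / 2 * a + 1 / 2 * b) ^ p := by
  rw [jensenGap]; ring_nf

lemma jensenGap_nonneg (hp : 1 ≤ p) (ha : 0 ≤ a) (hb : 0 ≤ b) : 0 ≤ jensenGap p a b := by
  rw [jensenGap_eq, sub_nonneg]
  simpa only [smul_eq_mul] using (convexOn_rpow hp).2 (Set.mem_Ici.2 ha) (Set.mem_Ici.2 hb)
    (by norm_num : (0 : ℝ) ≤ 1 / 2) (by norm_num : (0 : ℝ) ≤ 1 / 2) (by norm_num)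

lemma jensenGap_pos (hp : 1 < p) (ha : 0 ≤ a) (hb : 0 ≤ b) (hab : a ≠ b) :
    0 < jensenGap p a b := by
  rw [jensenGap_eq, sub_pos]
  simpa only [smul_eq_mul] using (strictConvexOn_rpow hp).2 (Set.mem_Ici.2 ha)
    (Set.mem_Ici.2 hb) hab (by norm_num : (0 : ℝ) < 1 / 2) (by norm_num : (0 : ℝ) < 1 / 2)
    (by norm_num)

lemma jensenGap_mul {c : ℝ} (hc : 0 ≤ c) (ha : 0 ≤ a) (hb : 0 ≤ b) :
    jensenGap p (c * a) (c * b) = c ^ p * jensenGap p a b := by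
  have hmid : (c * a + c * b) / 2 = c * ((a + b) / 2) := by ring
  simp only [jensenGap, hmid, Real.mul_rpow hc ha, Real.mul_rpow hc hb,
    Real.mul_rpow hc (by positivity : 0 ≤ (a + b) / 2)]
  ring

/-- Away from `t = 1` the gap is bounded below by compactness; near `t = 1`, `(1 - t) ^ p` is
small. -/
lemma exists_one_sub_rpow_le (hp : 1 < p) {ε : ℝ} (hε : 0 < ε) :
    ∃ C ≥ 0, ∀ t ∈ Set.Icc (0 : ℝ) 1, (1 - t) ^ p ≤ ε + C * jensenGap p 1 t := by
  set K := Set.Icc (0 : ℝ) 1 ∩ {t | ε ≤ (1 - t) ^ p}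
  have hK : IsCompact K :=
    isCompact_Icc.inter_right (isClosed_le continuous_const (by fun_prop (disch := linarith)))
  have hgap_pos : ∀ t ∈ K, 0 < jensenGap p 1 t := by
    rintro t ⟨⟨ht0, -⟩, htε⟩
    refine jensenGap_pos hp zero_le_one ht0 fun h1t => ?_
    have : ε ≤ (1 - 1 : ℝ) ^ p := h1t ▸ htε
    rw [sub_self, Real.zero_rpow (by linarith)] at this
    linarith
  have hcont : ContinuousOn (fun t => (jensenGap p 1 t)⁻¹) K := by
    refine ContinuousOn.inv₀ (Continuous.continuousOn ?_) fun t ht => (hgap_pos t ht).ne'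
    unfold jensenGap
    fun_prop (disch := linarith)
  obtain ⟨C, hC⟩ := hK.exists_bound_of_continuousOn hcont
  refine ⟨max C 0, le_max_right _ _, fun t ht => ?_⟩
  have hgap := jensenGap_nonneg hp.le zero_le_one ht.1
  have h1t : (1 - t) ^ p ≤ 1 :=
    Real.rpow_le_one (by linarith [ht.2]) (by linarith [ht.1]) (by linarith)
  by_cases htK : ε ≤ (1 - t) ^ p
  · have hpos := hgap_pos t ⟨ht, htK⟩
    have hinv : (jensenGap p 1 t)⁻¹ ≤ max C 0 :=
      (le_abs_self _).trans ((hC t ⟨ht, htK⟩).trans (le_max_left _ _))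
    have : 1 ≤ max C 0 * jensenGap p 1 t := by
      rwa [inv_le_iff_one_le_mul₀ hpos] at hinv
    linarith
  · nlinarith [le_max_right C 0]

lemma exists_abs_sub_rpow_le (hp : 1 < p) {ε : ℝ} (hε : 0 < ε) :
    ∃ C ≥ 0, ∀ a b : ℝ, 0 ≤ a → 0 ≤ b →
      |a - b| ^ p ≤ ε * (a ^ p + b ^ p) + C * jensenGap p a b := by
  obtain ⟨C, hC0, hC⟩ := exists_one_sub_rpow_le hp hε
  refine ⟨C, hC0, fun a b ha hb => ?_⟩
  wlog hba : b ≤ a generalizing a b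
  · have h := this b a hb ha (le_of_not_ge hba)
    rwa [abs_sub_comm, add_comm (b ^ p), jensenGap_comm] at h
  rcases ha.eq_or_lt with rfl | ha
  · obtain rfl : b = 0 := le_antisymm hba hb
    rw [sub_self, abs_zero, Real.zero_rpow (by linarith)]
    have := jensenGap_nonneg hp.le le_rfl le_rfl
    positivity
  set t := b / a
  have ht : t ∈ Set.Icc (0 : ℝ) 1 := ⟨div_nonneg hb ha.le, (div_le_one ha).2 hba⟩
  have hb_eq : b = a * t := (mul_div_cancel₀ b ha.ne').symm
  have hdiff : |a - b| ^ p = a ^ p * (1 - t) ^ p := by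
    rw [hb_eq, ← Real.mul_rpow ha.le (by linarith [ht.2]), abs_of_nonneg (by nlinarith [ht.2])]
    ring_nf
  have hgap : jensenGap p a b = a ^ p * jensenGap p 1 t := by
    rw [hb_eq, ← jensenGap_mul ha.le zero_le_one ht.1, mul_one]
  have hap : 0 ≤ a ^ p := by positivity
  have hbp : 0 ≤ b ^ p := by positivity
  calc |a - b| ^ p = a ^ p * (1 - t) ^ p := hdiff
    _ ≤ a ^ p * (ε + C * jensenGap p 1 t) := mul_le_mul_of_nonneg_left (hC t ht) hap
    _ = ε * a ^ p + C * jensenGap p a b := by rw [hgap]; ring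
    _ ≤ ε * (a ^ p + b ^ p) + C * jensenGap p a b := by nlinarith

end JensenGap

section LpIntegral

variable {X : Type*} [MeasurableSpace X] {m : Measure X} {p : ℝ}

lemma lpIntOn_eq_eLpNorm_rpow (hp : 0 < p) (f : X → ℝ) (B : Set X) :
    lpIntOn m p f B = eLpNorm f (ENNReal.ofReal p) (m.restrict B) ^ p := by
  have hp' : ENNReal.ofReal p ≠ 0 := by simpa using hp
  rw [eLpNorm_eq_eLpNorm' hp' ENNReal.ofReal_ne_top, ENNReal.toReal_ofReal hp.le,
    ← lintegral_rpow_enorm_eq_rpow_eLpNorm' hp, lpIntOn]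
  simp only [Real.enorm_eq_ofReal_abs]

lemma lpIntOn_lt_top_iff_memLp (hp : 0 < p) {f : X → ℝ} (hf : Measurable f) (B : Set X) :
    lpIntOn m p f B < ∞ ↔ MemLp f (ENNReal.ofReal p) (m.restrict B) := by
  rw [lpIntOn_eq_eLpNorm_rpow hp, ENNReal.rpow_lt_top_iff_of_pos hp]
  exact ⟨fun h => ⟨hf.aestronglyMeasurable, h⟩, fun h => h.2⟩

lemma tendsto_lpIntOn_iff_tendsto_eLpNorm (hp : 0 < p) {ι : Type*} {l : Filter ι}
    {f : ι → X → ℝ} :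
    Tendsto (fun i => lpIntOn m p (f i) univ) l (𝓝 0) ↔
      Tendsto (fun i => eLpNorm (f i) (ENNReal.ofReal p) m) l (𝓝 0) := by
  simp only [lpIntOn_eq_eLpNorm_rpow hp, Measure.restrict_univ]
  refine ⟨fun h => ?_, fun h => ?_⟩
  · have := ((ENNReal.continuous_rpow_const (y := p⁻¹)).tendsto 0).comp h
    simpa [Function.comp_def, ENNReal.rpow_rpow_inv hp.ne',
      ENNReal.zero_rpow_of_pos (inv_pos.2 hp)] using this
  · have := ((ENNReal.continuous_rpow_const (y := p)).tendsto 0).comp h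
    simpa [Function.comp_def, ENNReal.zero_rpow_of_pos hp] using this

lemma lpIntOn_mono_ae (hp : 0 ≤ p) {f g : X → ℝ} {B : Set X}
    (h : ∀ᵐ x ∂m.restrict B, |f x| ≤ |g x|) : lpIntOn m p f B ≤ lpIntOn m p g B :=
  lintegral_mono_ae <| h.mono fun _ hx => ENNReal.rpow_le_rpow (ENNReal.ofReal_le_ofReal hx) hp

lemma LpTendsto.abs (hp : 0 ≤ p) {g : ℕ → X → ℝ} {g₀ : X → ℝ} (hg : ∀ n, 0 ≤ g n)
    (h : LpTendsto m p g g₀) : LpTendsto m p g (fun x => |g₀ x|) :=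
  tendsto_of_tendsto_of_tendsto_of_le_of_le tendsto_const_nhds h (fun _ => zero_le)
    fun n => lpIntOn_mono_ae hp <| Eventually.of_forall fun x => by
      simpa only [abs_abs, abs_of_nonneg (hg n x)] using abs_abs_sub_abs_le_abs_sub (g n x) (g₀ x)

lemma two_mul_ofReal_jensenGap_add {a b : ℝ} (hp : 1 ≤ p) (ha : 0 ≤ a) (hb : 0 ≤ b) :
    2 * ENNReal.ofReal (jensenGap p a b) + 2 * ENNReal.ofReal |(a + b) / 2| ^ p =
      ENNReal.ofReal |a| ^ p + ENNReal.ofReal |b| ^ p := by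
  have hp0 : 0 ≤ p := by linarith
  simp only [abs_of_nonneg ha, abs_of_nonneg hb, abs_of_nonneg (by positivity : 0 ≤ (a + b) / 2),
    ENNReal.ofReal_rpow_of_nonneg ha hp0, ENNReal.ofReal_rpow_of_nonneg hb hp0,
    ENNReal.ofReal_rpow_of_nonneg (by positivity : 0 ≤ (a + b) / 2) hp0]
  rw [← ENNReal.ofReal_ofNat 2, ← ENNReal.ofReal_mul zero_le_two, ← ENNReal.ofReal_mul zero_le_two,
    ← ENNReal.ofReal_add (by have := jensenGap_nonneg hp ha hb; positivity) (by positivity),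
    ← ENNReal.ofReal_add (by positivity) (by positivity), jensenGap]
  ring_nf

@[fun_prop]
lemma Measurable.jensenGap {f g : X → ℝ} (hf : Measurable f) (hg : Measurable g) :
    Measurable fun x => jensenGap p (f x) (g x) := by
  unfold AxSob.jensenGap; fun_prop

variable {g : ℕ → X → ℝ} {E : ℝ≥0∞}

lemma tendsto_lintegral_jensenGap (hp : 1 ≤ p) (hg : ∀ n, Measurable (g n)) (hg0 : ∀ n, 0 ≤ g n)
    (hE : E ≠ ∞) (hmid : ∀ j l, E ≤ lpIntOn m p (fun x => (g j x + g l x) / 2) univ)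
    (hlim : Tendsto (fun n => lpIntOn m p (g n) univ) atTop (𝓝 E)) :
    Tendsto (fun jl : ℕ × ℕ => ∫⁻ x, ENNReal.ofReal (jensenGap p (g jl.1 x) (g jl.2 x)) ∂m)
      atTop (𝓝 0) := by
  set Γ := fun jl : ℕ × ℕ => ∫⁻ x, ENNReal.ofReal (jensenGap p (g jl.1 x) (g jl.2 x)) ∂m
  have hΓ : ∀ j l, 2 * Γ (j, l) + 2 * E ≤ lpIntOn m p (g j) univ + lpIntOn m p (g l) univ := by
    intro j l
    have hmeas : Measurable fun x => ENNReal.ofReal (jensenGap p (g j x) (g l x)) := by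
      fun_prop
    calc 2 * Γ (j, l) + 2 * E
        ≤ 2 * Γ (j, l) + 2 * lpIntOn m p (fun x => (g j x + g l x) / 2) univ := by
          gcongr; exact hmid j l
      _ = lpIntOn m p (g j) univ + lpIntOn m p (g l) univ := by
          simp only [Γ, lpIntOn, Measure.restrict_univ]
          rw [← lintegral_const_mul _ hmeas, ← lintegral_const_mul' _ _ (by simp),
            ← lintegral_add_left (hmeas.const_mul _), ← lintegral_add_left (by fun_prop)]
          exact lintegral_congr fun x => two_mul_ofReal_jensenGap_add hp (hg0 j x) (hg0 l x)
  have hupper : Tendsto (fun jl : ℕ × ℕ =>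
      lpIntOn m p (g jl.1) univ + lpIntOn m p (g jl.2) univ - (E + E)) atTop (𝓝 0) := by
    simpa using ENNReal.Tendsto.sub (tendsto_add_fst_snd hlim) (tendsto_const_nhds (x := E + E))
      (Or.inr (by finiteness))
  refine tendsto_of_tendsto_of_tendsto_of_le_of_le tendsto_const_nhds hupper (fun _ => zero_le)
    fun jl => ?_
  calc Γ jl ≤ 2 * Γ jl := by
        rw [two_mul]; exact le_self_add
    _ ≤ _ := ENNReal.le_sub_of_add_le_right (by finiteness) (two_mul E ▸ hΓ jl.1 jl.2)

lemma ofReal_abs_sub_rpow_le {a b ε C : ℝ} (hp : 1 ≤ p) (ha : 0 ≤ a) (hb : 0 ≤ b) (hε : 0 ≤ ε)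
    (hC : 0 ≤ C) (h : |a - b| ^ p ≤ ε * (a ^ p + b ^ p) + C * jensenGap p a b) :
    ENNReal.ofReal |a - b| ^ p ≤ ENNReal.ofReal ε * (ENNReal.ofReal |a| ^ p +
      ENNReal.ofReal |b| ^ p) + ENNReal.ofReal C * ENNReal.ofReal (jensenGap p a b) := by
  have hp0 : 0 ≤ p := by linarith
  have hgap := jensenGap_nonneg hp ha hb
  rw [abs_of_nonneg ha, abs_of_nonneg hb, ENNReal.ofReal_rpow_of_nonneg ha hp0,
    ENNReal.ofReal_rpow_of_nonneg hb hp0, ENNReal.ofReal_rpow_of_nonneg (abs_nonneg _) hp0,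
    ← ENNReal.ofReal_add (by positivity) (by positivity), ← ENNReal.ofReal_mul hε,
    ← ENNReal.ofReal_mul hC, ← ENNReal.ofReal_add (by positivity) (by positivity)]
  exact ENNReal.ofReal_le_ofReal h

lemma tendsto_lpIntOn_sub (hp : 1 < p) (hg : ∀ n, Measurable (g n)) (hg0 : ∀ n, 0 ≤ g n)
    (hE : E ≠ ∞) (hmid : ∀ j l, E ≤ lpIntOn m p (fun x => (g j x + g l x) / 2) univ)
    (hlim : Tendsto (fun n => lpIntOn m p (g n) univ) atTop (𝓝 E)) :
    Tendsto (fun jl : ℕ × ℕ => lpIntOn m p (fun x => g jl.1 x - g jl.2 x) univ) atTop (𝓝 0) := by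
  rw [ENNReal.tendsto_nhds_zero]
  intro δ hδ
  have hsmall : Tendsto (fun ε : ℝ => ENNReal.ofReal ε * (E + E)) (𝓝[>] 0) (𝓝 0) := by
    simpa using ENNReal.Tendsto.mul_const
      ((ENNReal.continuous_ofReal.tendsto 0).mono_left nhdsWithin_le_nhds) (Or.inr (by finiteness))
  obtain ⟨ε, hεδ, hε⟩ := ((hsmall.eventually (gt_mem_nhds hδ)).and self_mem_nhdsWithin).exists
  obtain ⟨C, hC0, hC⟩ := exists_abs_sub_rpow_le hp hε
  have hbound : ∀ jl : ℕ × ℕ, lpIntOn m p (fun x => g jl.1 x - g jl.2 x) univ ≤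
      ENNReal.ofReal ε * (lpIntOn m p (g jl.1) univ + lpIntOn m p (g jl.2) univ) +
        ENNReal.ofReal C * ∫⁻ x, ENNReal.ofReal (jensenGap p (g jl.1 x) (g jl.2 x)) ∂m := by
    rintro ⟨j, l⟩
    simp only [lpIntOn, Measure.restrict_univ]
    rw [← lintegral_add_left (by fun_prop), ← lintegral_const_mul _ (by fun_prop),
      ← lintegral_const_mul _ (by fun_prop), ← lintegral_add_left (by fun_prop)]
    exact lintegral_mono fun x => ofReal_abs_sub_rpow_le hp.le (hg0 j x) (hg0 l x) hε.le hC0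
      (hC _ _ (hg0 j x) (hg0 l x))
  have hrhs := (ENNReal.Tendsto.const_mul (a := ENNReal.ofReal ε) (tendsto_add_fst_snd hlim)
    (Or.inr ENNReal.ofReal_ne_top)).add (ENNReal.Tendsto.const_mul (a := ENNReal.ofReal C)
      (tendsto_lintegral_jensenGap hp.le hg hg0 hE hmid hlim) (Or.inr ENNReal.ofReal_ne_top))
  rw [mul_zero, add_zero] at hrhs
  filter_upwards [hrhs.eventually (gt_mem_nhds hεδ)] with jl hjl
  exact (hbound jl).trans hjl.le

lemma exists_measurable_lpTendsto (hp : 1 ≤ p) (hg : ∀ n, Measurable (g n))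
    (hfin : ∀ n, lpIntOn m p (g n) univ < ∞)
    (hcauchy : Tendsto (fun jl : ℕ × ℕ => lpIntOn m p (fun x => g jl.1 x - g jl.2 x) univ)
      atTop (𝓝 0)) :
    ∃ g₀, Measurable g₀ ∧ LpTendsto m p g g₀ := by
  have hp0 : 0 < p := by linarith
  have : Fact (1 ≤ ENNReal.ofReal p) := ⟨by simpa using hp⟩
  have hmem : ∀ n, MemLp (g n) (ENNReal.ofReal p) m := fun n => by
    simpa using (lpIntOn_lt_top_iff_memLp hp0 (hg n) univ).1 (hfin n)
  set G : ℕ → Lp ℝ (ENNReal.ofReal p) m := fun n => (hmem n).toLp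
  have hG : CauchySeq G := by
    rw [cauchySeq_iff_tendsto_dist_atTop_0]
    simp only [G, dist_edist, Lp.edist_toLp_toLp]
    have h := (ENNReal.tendsto_toReal ENNReal.zero_ne_top).comp
      ((tendsto_lpIntOn_iff_tendsto_eLpNorm hp0).1 hcauchy)
    rw [ENNReal.toReal_zero] at h
    exact h
  obtain ⟨G₀, hG₀⟩ := cauchySeq_tendsto_of_complete hG
  have hmeas := Lp.aestronglyMeasurable G₀
  refine ⟨hmeas.mk G₀, hmeas.stronglyMeasurable_mk.measurable, ?_⟩
  rw [LpTendsto, tendsto_lpIntOn_iff_tendsto_eLpNorm hp0]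
  refine ((Lp.tendsto_Lp_iff_tendsto_eLpNorm' G G₀).1 hG₀).congr fun n => eLpNorm_congr_ae ?_
  exact ((hmem n).coeFn_toLp.sub hmeas.ae_eq_mk)

lemma lpIntOn_le_of_lpTendsto (hp : 1 ≤ p) (hg : ∀ n, Measurable (g n)) {g₀ : X → ℝ}
    (hg₀ : Measurable g₀) (hconv : LpTendsto m p g g₀)
    (hlim : Tendsto (fun n => lpIntOn m p (g n) univ) atTop (𝓝 E)) :
    lpIntOn m p g₀ univ ≤ E := by
  have hp0 : 0 < p := by linarith
  have hp' : 1 ≤ ENNReal.ofReal p := by simpa using hp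
  simp only [lpIntOn_eq_eLpNorm_rpow hp0, Measure.restrict_univ] at hlim ⊢
  have hnorm := ((ENNReal.continuous_rpow_const (y := p⁻¹)).tendsto E).comp hlim
  simp only [Function.comp_def, ENNReal.rpow_rpow_inv hp0.ne'] at hnorm
  have hsum := hnorm.add
    ((tendsto_lpIntOn_iff_tendsto_eLpNorm hp0 (f := fun n x => g n x - g₀ x)).1 hconv)
  rw [add_zero] at hsum
  have htri : ∀ n, eLpNorm g₀ (ENNReal.ofReal p) m ≤
      eLpNorm (g n) (ENNReal.ofReal p) m + eLpNorm (g n - g₀) (ENNReal.ofReal p) m := fun n => by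
    simpa [eLpNorm_sub_comm (g n)] using
      eLpNorm_add_le (hg n).aestronglyMeasurable (hg₀.sub (hg n)).aestronglyMeasurable hp'
  calc eLpNorm g₀ (ENNReal.ofReal p) m ^ p ≤ (E ^ p⁻¹) ^ p :=
        ENNReal.rpow_le_rpow (ge_of_tendsto' hsum htri) hp0.le
    _ = E := ENNReal.rpow_inv_rpow hp0.ne' E

end LpIntegral

variable {X : Type*} [MetricSpace X] [MeasurableSpace X] {m : Measure X} {p : ℝ}

lemma LpLocMem.sub (hp : 0 < p) {u v : X → ℝ} (hu : LpLocMem m p u) (hv : LpLocMem m p v) :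
    LpLocMem m p (fun x => u x - v x) := by
  refine ⟨hu.1.sub hv.1, fun B hB hBb => ?_⟩
  exact (lpIntOn_lt_top_iff_memLp hp (hu.1.sub hv.1) B).2
    (((lpIntOn_lt_top_iff_memLp hp hu.1 B).1 (hu.2 B hB hBb)).sub
      ((lpIntOn_lt_top_iff_memLp hp hv.1 B).1 (hv.2 B hB hBb)))

lemma lpLocTendsto_const (hp : 0 < p) (u : X → ℝ) : LpLocTendsto m p (fun _ => u) u :=
  fun B _ _ => by simp [lpIntOn, ENNReal.zero_rpow_of_pos hp]

namespace DStructure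

variable (S : DStructure X m p) {u u₁ u₂ g g₁ g₂ h : X → ℝ}

lemma mem_D_of_ae_le (hu : LpLocMem m p u) (hg : g ∈ S.D u) (hh : Measurable h) (hh0 : 0 ≤ h)
    (hgh : g ≤ᵐ[m] h) : h ∈ S.D u := by
  have h' := S.axiomA2 u u g g h 1 0 hu hu hg hg hh hh0
    (hgh.mono fun x hx => by simpa using hx)
  rwa [S.congr_ae _ u (Eventually.of_forall fun x => by simp)] at h'

lemma add_mem_D_sub (hu₁ : LpLocMem m p u₁) (hu₂ : LpLocMem m p u₂) (hg₁ : g₁ ∈ S.D u₁)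
    (hg₂ : g₂ ∈ S.D u₂) : (fun x => g₁ x + g₂ x) ∈ S.D (fun x => u₁ x - u₂ x) := by
  have h' := S.axiomA2 u₁ u₂ g₁ g₂ (fun x => g₁ x + g₂ x) 1 (-1) hu₁ hu₂ hg₁ hg₂
    ((S.measurable_of_mem _ _ hg₁).add (S.measurable_of_mem _ _ hg₂))
    (add_nonneg (S.nonneg_of_mem _ _ hg₁) (S.nonneg_of_mem _ _ hg₂)) (by simp)
  rwa [S.congr_ae _ (fun x => u₁ x - u₂ x) (Eventually.of_forall fun x => by ring)] at h'

lemma midpoint_mem_D (hu : LpLocMem m p u) (hg₁ : g₁ ∈ S.D u) (hg₂ : g₂ ∈ S.D u) :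
    (fun x => (g₁ x + g₂ x) / 2) ∈ S.D u := by
  have h' := S.axiomA2 u u g₁ g₂ (fun x => (g₁ x + g₂ x) / 2) (1 / 2) (1 / 2) hu hu hg₁ hg₂
    (((S.measurable_of_mem _ _ hg₁).add (S.measurable_of_mem _ _ hg₂)).div_const 2)
    (fun x => div_nonneg (add_nonneg (S.nonneg_of_mem _ _ hg₁ x) (S.nonneg_of_mem _ _ hg₂ x))
      zero_le_two)
    (Eventually.of_forall fun x => by rw [abs_of_pos (by norm_num : (0 : ℝ) < 1 / 2)]; linarith)
  rwa [S.congr_ae _ u (Eventually.of_forall fun x => by ring)] at h'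

lemma energyOn_le_lpIntOn (hg : g ∈ S.D u) (B : Set X) : S.energyOn u B ≤ lpIntOn m p g B :=
  iInf₂_le g hg

lemma exists_mem_D_lpIntOn_lt {a : ℝ≥0∞} (h : S.energy u < a) :
    ∃ g ∈ S.D u, lpIntOn m p g univ < a := by
  simpa [energy, energyOn, iInf_lt_iff] using h

lemma sub_mem_sobolevClass (hp : 0 < p) (hu₁ : u₁ ∈ S.SobolevClass) (hu₂ : u₂ ∈ S.SobolevClass) :
    (fun x => u₁ x - u₂ x) ∈ S.SobolevClass := by
  obtain ⟨g₁, hg₁, hg₁fin⟩ := S.exists_mem_D_lpIntOn_lt hu₁.2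
  obtain ⟨g₂, hg₂, hg₂fin⟩ := S.exists_mem_D_lpIntOn_lt hu₂.2
  have hg₁m := S.measurable_of_mem _ _ hg₁
  have hg₂m := S.measurable_of_mem _ _ hg₂
  refine ⟨hu₁.1.sub hp hu₂.1,
    (S.energyOn_le_lpIntOn (S.add_mem_D_sub hu₁.1 hu₂.1 hg₁ hg₂) _).trans_lt ?_⟩
  exact (lpIntOn_lt_top_iff_memLp hp (hg₁m.add hg₂m) univ).2
    (((lpIntOn_lt_top_iff_memLp hp hg₁m univ).1 hg₁fin).add
      ((lpIntOn_lt_top_iff_memLp hp hg₂m univ).1 hg₂fin))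

lemma exists_seq_tendsto_energy (hu : S.energy u < ∞) :
    ∃ g : ℕ → X → ℝ, (∀ n, g n ∈ S.D u) ∧ (∀ n, lpIntOn m p (g n) univ < ∞) ∧
      Tendsto (fun n => lpIntOn m p (g n) univ) atTop (𝓝 (S.energy u)) := by
  have hlt : ∀ n : ℕ, S.energy u < S.energy u + (↑(n + 1) : ℝ≥0∞)⁻¹ := fun n =>
    ENNReal.lt_add_right hu.ne (by simp)
  choose g hg hgE using fun n => S.exists_mem_D_lpIntOn_lt (hlt n)
  refine ⟨g, hg, fun n => (hgE n).trans (ENNReal.add_lt_top.2 ⟨hu, by simp⟩), ?_⟩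
  have hupper : Tendsto (fun n : ℕ => S.energy u + (↑(n + 1) : ℝ≥0∞)⁻¹) atTop
      (𝓝 (S.energy u)) := by
    simpa using tendsto_const_nhds.add
      (ENNReal.tendsto_inv_nat_nhds_zero.comp (tendsto_add_atTop_nat 1))
  exact tendsto_of_tendsto_of_tendsto_of_le_of_le tendsto_const_nhds hupper
    (fun n => S.energyOn_le_lpIntOn (hg n) univ) fun n => (hgE n).le

theorem exists_isMinimalPG (hp : 1 < p) (hu : u ∈ S.SobolevClass) : ∃ g, S.IsMinimalPG u g := by
  obtain ⟨g, hgD, hgfin, hlim⟩ := S.exists_seq_tendsto_energy hu.2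
  have hgm : ∀ n, Measurable (g n) := fun n => S.measurable_of_mem _ _ (hgD n)
  have hg0 : ∀ n, 0 ≤ g n := fun n => S.nonneg_of_mem _ _ (hgD n)
  have hcauchy := tendsto_lpIntOn_sub hp hgm hg0 hu.2.ne
    (fun j l => S.energyOn_le_lpIntOn (S.midpoint_mem_D hu.1 (hgD j) (hgD l)) univ) hlim
  obtain ⟨g₀, hg₀m, hconv⟩ := exists_measurable_lpTendsto hp.le hgm hgfin hcauchy
  replace hconv := hconv.abs (by linarith) hg0
  have hle := lpIntOn_le_of_lpTendsto hp.le hgm hg₀m.abs hconv hlim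
  have hmem : (fun x => |g₀ x|) ∈ S.D u :=
    S.axiomA5 (fun _ => u) g u _ (fun _ => hu.1) hgD (fun n => ⟨hgm n, hgfin n⟩) hu.1 hg₀m.abs
      (fun x => abs_nonneg _) (lpLocTendsto_const (by linarith) u) hconv
  exact ⟨_, hmem, ⟨hg₀m.abs, hle.trans_lt hu.2⟩, le_antisymm hle (S.energyOn_le_lpIntOn hmem univ)⟩

variable {S} in
theorem PointwiseLocal.l2prop (hp : 0 ≤ p) (hloc : S.PointwiseLocal) : S.L2prop := by
  intro u hu B hB hconst g hg
  have hgm := S.measurable_of_mem _ _ hg.1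
  have hzero : lpIntOn m p g B = 0 := by
    refine le_antisymm ?_ zero_le
    rw [← hloc.1 u hu B hB hconst]
    refine le_iInf₂ fun h hh => lpIntOn_mono_ae hp ?_
    filter_upwards [ae_restrict_of_ae (hloc.2 u hu g hg h hh)] with x hx
    rwa [abs_of_nonneg (S.nonneg_of_mem _ _ hg.1 x), abs_of_nonneg (S.nonneg_of_mem _ _ hh x)]
  rw [lpIntOn, lintegral_eq_zero_iff (by fun_prop)] at hzero
  filter_upwards [hzero] with x hx
  rcases ENNReal.rpow_eq_zero_iff.1 hx with ⟨h0, -⟩ | ⟨htop, -⟩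
  · exact abs_eq_zero.1 (le_antisymm (ENNReal.ofReal_eq_zero.1 h0) (abs_nonneg _))
  · exact absurd htop ENNReal.ofReal_ne_top

end DStructure

end AxSob

open AxSob AxSob.DStructure

theorem pointwiseLocal_implies_shanmugalingam_general {X : Type*} [MetricSpace X]
    [MeasurableSpace X] (m : MeasureTheory.Measure X) (p : ℝ) (hp : 1 < p) (S : DStructure X m p)
    (hloc : S.PointwiseLocal) : S.ShanmugalingamLocal := by
  intro u₁ hu₁ u₂ hu₂ B hB hae g₁ hg₁ g₂ hg₂
  have hp0 : 0 < p := by linarith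
  set w := fun x => u₁ x - u₂ x
  have hw : w ∈ S.SobolevClass := S.sub_mem_sobolevClass hp0 hu₁ hu₂
  obtain ⟨Dw, hDw⟩ := S.exists_isMinimalPG hp hw
  obtain ⟨Du₂, hDu₂⟩ := S.exists_isMinimalPG hp hu₂
  have hDw0 : ∀ᵐ x ∂m.restrict B, Dw x = 0 :=
    hloc.l2prop hp0.le w hw B hB ⟨0, hae.mono fun x hx => sub_eq_zero.2 hx⟩ Dw hDw
  have hsum : (fun x => g₁ x + Dw x) ∈ S.D u₂ := by
    have h := S.add_mem_D_sub hu₁.1 hw.1 hg₁ hDw.1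
    rwa [S.congr_ae _ u₂ (Filter.Eventually.of_forall fun x => sub_sub_cancel _ _)] at h
  have hle₁ := hloc.2 u₂ hu₂ Du₂ hDu₂ _ hsum
  have hle₂ := hloc.2 u₂ hu₂ Du₂ hDu₂ g₂ hg₂
  refine S.mem_D_of_ae_le hu₂.1 hDu₂.1
    (((S.measurable_of_mem _ _ hg₁).indicator hB).add
      ((S.measurable_of_mem _ _ hg₂).indicator hB.compl))
    (fun x => add_nonneg (Set.indicator_nonneg (fun y _ => S.nonneg_of_mem _ _ hg₁ y) x)
      (Set.indicator_nonneg (fun y _ => S.nonneg_of_mem _ _ hg₂ y) x)) ?_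
  filter_upwards [hle₁, hle₂, (MeasureTheory.ae_restrict_iff' hB).1 hDw0] with x h₁ h₂ hx0
  by_cases hx : x ∈ B
  · simpa [hx, hx0 hx] using h₁
  · simpa [hx] using h₂

/-- A pointwise local D-structure is strongly local in the sense of Shanmugalingam. -/
theorem pointwiseLocal_implies_shanmugalingam {X : Type*} [MetricSpace X] [CompleteSpace X]
    [TopologicalSpace.SeparableSpace X] [MeasurableSpace X] [BorelSpace X]
    (m : MeasureTheory.Measure X) (hm : m ≠ 0)
    (hball : ∀ (x : X) (r : ℝ), m (Metric.ball x r) < ∞)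
    (p : ℝ) (hp : 1 < p) (S : DStructure X m p)
    (hloc : S.PointwiseLocal) : S.ShanmugalingamLocal :=
  pointwiseLocal_implies_shanmugalingam_general m p hp S hloc
end
end

section
/- Let (X,d,m) be a metric measure space, p ∈ (1,∞), and let D be a D-structure on (X,d,m) that is strongly local in the sense of Timoshin. Then D is pointwise local, i.e. it satisfies properties L1 and L5. -/
/-!
L5: applied with `u₁ = u₂ = u`, Timoshin locality puts `min (Du) h` into `D[u]` for every
`h ∈ D[u]`; its energy is at most that of `Du`, which is already minimal, so `min (Du) h = Du`
a.e., i.e. `Du ≤ h` a.e.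

L1: comparing `u` with the constant `c` (whose pseudo-gradient is `0`), Timoshin locality gives
`χ_{u<c} g ∈ D[min(u,c)]`, and applied to `-u, -c` it gives `χ_{u>c} g ∈ D[max(u,c)]`. Since
`min(u,c) + max(u,c) = u + c`, axiom A2 yields `χ_{u≠c} g ∈ D[u + c] = D[u]`, a pseudo-gradient
of `u` that vanishes on the set where `u = c`.
-/

open Filter Set
open scoped ENNReal NNReal Topology

noncomputable section

namespace AxSob

open MeasureTheory ENNReal

variable {X : Type*} [MeasurableSpace X] {m : Measure X} {p : ℝ}

section LpLoc

theorem measurable_ofReal_abs_rpow {u : X → ℝ} (hu : Measurable u) :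
    Measurable fun x => ENNReal.ofReal |u x| ^ p :=
  hu.abs.ennreal_ofReal.pow_const p

theorem lpIntOn_const (c : ℝ) (B : Set X) :
    lpIntOn m p (fun _ => c) B = ENNReal.ofReal |c| ^ p * m B := by
  simp [lpIntOn]

theorem lpIntOn_eq_zero (hp : 0 < p) {u : X → ℝ} {B : Set X}
    (hu : ∀ᵐ x ∂m.restrict B, u x = 0) : lpIntOn m p u B = 0 :=
  (lintegral_congr_ae (hu.mono fun x hx => by simp [hx, hp])).trans lintegral_zero

theorem lpIntOn_le_of_abs_le_abs_add_abs (hp : 0 ≤ p) {u v w : X → ℝ} (hu : Measurable u)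
    (h : ∀ x, |v x| ≤ |u x| + |w x|) (B : Set X) :
    lpIntOn m p v B ≤ LpAddConst (ENNReal.ofReal p)⁻¹ * (lpIntOn m p u B + lpIntOn m p w B) :=
  calc lpIntOn m p v B
      ≤ ∫⁻ x in B, LpAddConst (ENNReal.ofReal p)⁻¹ *
          (ENNReal.ofReal |u x| ^ p + ENNReal.ofReal |w x| ^ p) ∂m := by
        refine lintegral_mono fun x => le_trans ?_ (ENNReal.rpow_add_le_mul_rpow_add_rpow' _ _ hp)
        gcongr
        exact (ENNReal.ofReal_le_ofReal (h x)).trans ENNReal.ofReal_add_le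
    _ = LpAddConst (ENNReal.ofReal p)⁻¹ * (lpIntOn m p u B + lpIntOn m p w B) := by
        rw [lintegral_const_mul' _ _ (LpAddConst_lt_top _).ne,
          lintegral_add_left (measurable_ofReal_abs_rpow hu), lpIntOn, lpIntOn]

theorem abs_ae_eq_of_abs_le_of_lpIntOn_le (hp : 0 < p) {u v : X → ℝ} (hu : Measurable u)
    (hu_lt : lpIntOn m p u Set.univ < ∞) (hvu : ∀ x, |v x| ≤ |u x|)
    (hle : lpIntOn m p u Set.univ ≤ lpIntOn m p v Set.univ) : ∀ᵐ x ∂m, |v x| = |u x| := by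
  have hpow : ∀ x, ENNReal.ofReal |v x| ^ p ≤ ENNReal.ofReal |u x| ^ p := fun x =>
    ENNReal.rpow_le_rpow (ENNReal.ofReal_le_ofReal (hvu x)) hp.le
  simp only [lpIntOn, Measure.restrict_univ] at hu_lt hle
  filter_upwards [ae_eq_of_ae_le_of_lintegral_le (ae_of_all _ hpow)
    ((lintegral_mono hpow).trans_lt hu_lt).ne (measurable_ofReal_abs_rpow hu).aemeasurable hle]
    with x hx
  rwa [(ENNReal.rpow_left_injective hp.ne').eq_iff,
    ENNReal.ofReal_eq_ofReal_iff (abs_nonneg _) (abs_nonneg _)] at hx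

variable [MetricSpace X]

theorem measure_lt_top_of_isBounded (hball : ∀ (x : X) (r : ℝ), m (Metric.ball x r) < ∞)
    {B : Set X} (hB : Bornology.IsBounded B) : m B < ∞ := by
  rcases B.eq_empty_or_nonempty with rfl | ⟨x, -⟩
  · simp
  · obtain ⟨r, hr⟩ := hB.subset_ball x
    exact (measure_mono hr).trans_lt (hball x r)

theorem LpLocMem.const (hball : ∀ (x : X) (r : ℝ), m (Metric.ball x r) < ∞) (hp : 0 ≤ p)
    (c : ℝ) : LpLocMem m p (fun _ => c) :=
  ⟨measurable_const, fun B _ hB => by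
    rw [lpIntOn_const]
    exact ENNReal.mul_lt_top (ENNReal.rpow_lt_top_of_nonneg hp ENNReal.ofReal_ne_top)
      (measure_lt_top_of_isBounded hball hB)⟩

theorem LpLocMem.of_abs_le_abs_add_abs (hp : 0 ≤ p) {u v w : X → ℝ} (hu : LpLocMem m p u)
    (hw : LpLocMem m p w) (hv : Measurable v) (h : ∀ x, |v x| ≤ |u x| + |w x|) :
    LpLocMem m p v :=
  ⟨hv, fun B hBm hB => (lpIntOn_le_of_abs_le_abs_add_abs hp hu.1 h B).trans_lt <|
    mul_lt_top (LpAddConst_lt_top _) (add_lt_top.2 ⟨hu.2 B hBm hB, hw.2 B hBm hB⟩)⟩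

theorem LpLocMem.neg {u : X → ℝ} (hu : LpLocMem m p u) : LpLocMem m p (fun x => -u x) :=
  ⟨hu.1.neg, by simpa [lpIntOn] using hu.2⟩

variable (hball : ∀ (x : X) (r : ℝ), m (Metric.ball x r) < ∞) (hp : 0 ≤ p) {u : X → ℝ}
include hball hp

theorem LpLocMem.add_const (hu : LpLocMem m p u) (c : ℝ) : LpLocMem m p (fun x => u x + c) :=
  hu.of_abs_le_abs_add_abs hp (.const hball hp c) (hu.1.add_const c) fun _ => abs_add_le _ _

theorem LpLocMem.min_const (hu : LpLocMem m p u) (c : ℝ) : LpLocMem m p (fun x => min (u x) c) :=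
  hu.of_abs_le_abs_add_abs hp (.const hball hp c) (hu.1.min measurable_const) fun x => by
    rcases min_choice (u x) c with h | h <;> rw [h] <;> simp

theorem LpLocMem.max_const (hu : LpLocMem m p u) (c : ℝ) : LpLocMem m p (fun x => max (u x) c) :=
  hu.of_abs_le_abs_add_abs hp (.const hball hp c) (hu.1.max measurable_const) fun x => by
    rcases max_choice (u x) c with h | h <;> rw [h] <;> simp

end LpLoc

namespace DStructure

variable [MetricSpace X] (S : DStructure X m p)

theorem energyOn_le {u g : X → ℝ} (hg : g ∈ S.D u) (B : Set X) :
    S.energyOn u B ≤ lpIntOn m p g B :=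
  iInf₂_le g hg

theorem energyOn_anti {u v : X → ℝ} (h : S.D u ⊆ S.D v) (B : Set X) :
    S.energyOn v B ≤ S.energyOn u B :=
  biInf_mono h

theorem exists_mem_D_of_energy_lt_top {u : X → ℝ} (hu : S.energy u < ∞) :
    ∃ g, g ∈ S.D u := by
  by_contra! h
  simp [energy, energyOn, h] at hu

theorem mem_D_neg {u g : X → ℝ} (hu : LpLocMem m p u) (hg : g ∈ S.D u) :
    g ∈ S.D (fun x => -u x) := by
  simpa using S.axiomA2 u u g g g (-1) 0 hu hu hg hg (S.measurable_of_mem _ _ hg)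
    (S.nonneg_of_mem _ _ hg) (by simp)

theorem D_subset_D_neg {u : X → ℝ} (hu : LpLocMem m p u) : S.D u ⊆ S.D (fun x => -u x) :=
  fun _ => S.mem_D_neg hu

section Constants

variable (hball : ∀ (x : X) (r : ℝ), m (Metric.ball x r) < ∞) (hp : 0 ≤ p)
include hball hp

theorem zero_mem_D_const (c : ℝ) : (fun _ => (0 : ℝ)) ∈ S.D (fun _ => c) := by
  have hone : LpLocMem m p (fun _ : X => (1 : ℝ)) := .const hball hp 1
  have hA1 : (fun _ => (0 : ℝ)) ∈ S.D (fun _ => (1 : ℝ)) := by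
    simpa using S.axiomA1 (fun _ => 1) 0 hone (fun _ => zero_le_one) (LipschitzWith.const 1)
  simpa using S.axiomA2 _ _ _ _ (fun _ => 0) c 0 hone hone hA1 hA1 measurable_const le_rfl
    (by simp)

theorem mem_D_add_const {u g : X → ℝ} (hu : LpLocMem m p u) (hg : g ∈ S.D u) (c : ℝ) :
    g ∈ S.D (fun x => u x + c) := by
  simpa using S.axiomA2 u (fun _ => 1) g (fun _ => 0) g 1 c hu (.const hball hp 1) hg
    (S.zero_mem_D_const hball hp 1) (S.measurable_of_mem _ _ hg) (S.nonneg_of_mem _ _ hg)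
    (by simp)

end Constants

theorem const_mem_sobolevClass (hball : ∀ (x : X) (r : ℝ), m (Metric.ball x r) < ∞)
    (hp : 0 < p) (c : ℝ) : (fun _ => c) ∈ S.SobolevClass := by
  refine ⟨.const hball hp.le c, ?_⟩
  calc S.energy (fun _ => c) ≤ lpIntOn m p (fun _ => (0 : ℝ)) Set.univ :=
        S.energyOn_le (S.zero_mem_D_const hball hp.le c) _
    _ = 0 := lpIntOn_eq_zero hp (ae_of_all _ fun _ => rfl)
    _ < ∞ := zero_lt_top

theorem neg_mem_sobolevClass {u : X → ℝ} (hu : u ∈ S.SobolevClass) :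
    (fun x => -u x) ∈ S.SobolevClass :=
  ⟨hu.1.neg, (S.energyOn_anti (S.D_subset_D_neg hu.1) _).trans_lt hu.2⟩

namespace TimoshinLocal

variable {S} (hT : S.TimoshinLocal)
include hT

theorem l4prop : S.L4prop := fun u hu g hg h hh => by
  simpa using hT u hu u hu g hg h hh

variable (hball : ∀ (x : X) (r : ℝ), m (Metric.ball x r) < ∞) (hp : 0 < p)
include hball hp

section

variable {u g : X → ℝ} (hu : u ∈ S.SobolevClass) (hg : g ∈ S.D u)
include hu hg

theorem indicator_lt_mem_D_min_const (c : ℝ) :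
    {x | u x < c}.indicator g ∈ S.D (fun x => min (u x) c) := by
  convert hT u hu _ (S.const_mem_sobolevClass hball hp c) g hg _
    (S.zero_mem_D_const hball hp.le c) using 1
  funext x
  have hg0 : min (g x) 0 = 0 := min_eq_right (S.nonneg_of_mem _ _ hg x)
  simp only [Set.indicator_apply, Set.mem_ofPred_eq, hg0]
  split_ifs <;> simp_all

theorem indicator_gt_mem_D_max_const (c : ℝ) :
    {x | c < u x}.indicator g ∈ S.D (fun x => max (u x) c) := by
  have h := indicator_lt_mem_D_min_const hT hball hp (S.neg_mem_sobolevClass hu)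
    (S.mem_D_neg hu.1 hg) (-c)
  convert S.mem_D_neg (hu.1.neg.min_const hball hp.le (-c)) h using 2
  · funext x
    rw [min_neg_neg, neg_neg]
  · ext x
    simp only [Set.mem_ofPred_eq, neg_lt_neg_iff]

theorem indicator_ne_mem_D (c : ℝ) : {x | u x ≠ c}.indicator g ∈ S.D u := by
  have hsum := S.axiomA2 _ _ _ _ ({x | u x ≠ c}.indicator g) 1 1
    (hu.1.min_const hball hp.le c) (hu.1.max_const hball hp.le c)
    (indicator_lt_mem_D_min_const hT hball hp hu hg c)
    (indicator_gt_mem_D_max_const hT hball hp hu hg c)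
    ((S.measurable_of_mem _ _ hg).indicator (hu.1.1 (measurableSet_singleton c).compl))
    (Set.indicator_nonneg fun x _ => S.nonneg_of_mem _ _ hg x)
    (ae_of_all _ fun x => by
      rcases lt_trichotomy (u x) c with h | h | h
      · simp [h, h.ne, h.not_gt]
      · simp [h]
      · simp [h, h.ne', h.not_gt])
  simp only [one_mul, min_add_max] at hsum
  simpa using S.mem_D_add_const hball hp.le (hu.1.add_const hball hp.le c) hsum (-c)

end

theorem l1prop : S.L1prop := by
  rintro u hu B - ⟨c, hc⟩
  obtain ⟨g, hg⟩ := S.exists_mem_D_of_energy_lt_top hu.2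
  refine nonpos_iff_eq_zero.1 <|
    (S.energyOn_le (indicator_ne_mem_D hT hball hp hu hg c) B).trans_eq (lpIntOn_eq_zero hp ?_)
  filter_upwards [hc] with x hx
  simp [hx]

end TimoshinLocal

theorem L4prop.l5prop {S : DStructure X m p} (hp : 0 < p) (h4 : S.L4prop) : S.L5prop := by
  rintro u hu g ⟨hg, hg_Lp, hg_energy⟩ h hh
  have hg0 := S.nonneg_of_mem _ _ hg
  have hmin0 : ∀ x, 0 ≤ min (g x) (h x) := fun x => le_min (hg0 x) (S.nonneg_of_mem _ _ hh x)
  have hmin_eq := abs_ae_eq_of_abs_le_of_lpIntOn_le hp hg_Lp.1 hg_Lp.2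
    (fun x => by rw [abs_of_nonneg (hmin0 x), abs_of_nonneg (hg0 x)]; exact min_le_left _ _)
    (hg_energy.trans_le (S.energyOn_le (h4 u hu g hg h hh) Set.univ))
  filter_upwards [hmin_eq] with x hx
  rw [abs_of_nonneg (hmin0 x), abs_of_nonneg (hg0 x)] at hx
  exact min_eq_left_iff.1 hx

end DStructure

end AxSob

open AxSob AxSob.DStructure

theorem timoshin_implies_pointwiseLocal_general {X : Type*} [MetricSpace X] [MeasurableSpace X]
    (m : MeasureTheory.Measure X)
    (hball : ∀ (x : X) (r : ℝ), m (Metric.ball x r) < ∞)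
    (p : ℝ) (hp : 1 < p) (S : DStructure X m p)
    (hT : S.TimoshinLocal) : S.PointwiseLocal :=
  have hp₀ : 0 < p := one_pos.trans hp
  ⟨hT.l1prop hball hp₀, hT.l4prop.l5prop hp₀⟩

/-- A D-structure that is strongly local in the sense of Timoshin is pointwise local,
i.e. it satisfies properties L1 and L5. -/
theorem timoshin_implies_pointwiseLocal {X : Type*} [MetricSpace X] [CompleteSpace X]
    [TopologicalSpace.SeparableSpace X] [MeasurableSpace X] [BorelSpace X]
    (m : MeasureTheory.Measure X) (hm : m ≠ 0)
    (hball : ∀ (x : X) (r : ℝ), m (Metric.ball x r) < ∞)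
    (p : ℝ) (hp : 1 < p) (S : DStructure X m p)
    (hT : S.TimoshinLocal) : S.PointwiseLocal :=
  timoshin_implies_pointwiseLocal_general m hball p hp S hT
end
end

section
/- Let G = (V,E) be a locally finite connected graph with at least two vertices, equipped with the path metric d and the counting measure m on V, and with the D-structure D[u] := {g : V → [0,∞] : |u(x) − u(y)| ≤ g(x) + g(y) for all adjacent x ∼ y}. Then property L2 fails: there exist a function u : V → ℝ belonging to the Sobolev class S^p(V), a point x ∈ V, and a set B = {x} on which u is constant, such that the minimal pseudo-gradient Du satisfies Du(x) > 0. -/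
open scoped ENNReal

noncomputable section

namespace GraphSob

variable {V : Type*}

/-- The family of pseudo-gradients of `u : V → ℝ` on a graph `G`:
`D[u] = { g : V → [0,∞] : |u(x) - u(y)| ≤ g(x) + g(y) whenever x ∼ y }`. -/
def graphD (G : SimpleGraph V) (u : V → ℝ) : Set (V → ℝ≥0∞) :=
  {g | ∀ x y : V, G.Adj x y → ENNReal.ofReal |u x - u y| ≤ g x + g y}

/-- The `p`-Dirichlet energy of `u` with respect to the counting measure:
`E_p(u) = inf { ∑_{x ∈ V} g(x)^p : g ∈ D[u] }`. -/
def graphEnergy (G : SimpleGraph V) (p : ℝ) (u : V → ℝ) : ℝ≥0∞ :=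
  ⨅ (g : V → ℝ≥0∞) (_ : g ∈ graphD G u), ∑' x : V, g x ^ p

end GraphSob

open GraphSob

/-!
Take `u = 𝟙_{a}` for a vertex `a` of degree `n ≥ 1`. The pseudo-gradient equal to `1/2` on `a` and
its neighbours has energy `(n + 1) 2^{-p}`, which is `< n` because `p > 1`. A pseudo-gradient
vanishing at `a` must be `≥ 1` at every neighbour of `a`, so its energy is `≥ n`: it cannot be
minimal.
-/

open SimpleGraph

theorem ENNReal.add_one_mul_inv_two_rpow_lt {n : ℕ} (hn : 0 < n) {p : ℝ} (hp : 1 < p) :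
    (n + 1) * (2⁻¹ : ℝ≥0∞) ^ p < n :=
  calc (n + 1) * (2⁻¹ : ℝ≥0∞) ^ p
      < (n + 1) * 2⁻¹ := by
        gcongr
        · simp
        · simpa using ENNReal.rpow_lt_rpow_of_exponent_gt (by norm_num) (by norm_num) hp
    _ ≤ (n + n) * 2⁻¹ := by gcongr; exact_mod_cast hn
    _ = n := by
        rw [← two_mul, mul_comm, ← mul_assoc, ENNReal.inv_mul_cancel two_ne_zero ofNat_ne_top,
          one_mul]

namespace GraphSob

variable {V : Type*} {G : SimpleGraph V} {p : ℝ} {u : V → ℝ} {g : V → ℝ≥0∞}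

theorem graphEnergy_le_tsum (hg : g ∈ graphD G u) : graphEnergy G p u ≤ ∑' x, g x ^ p :=
  iInf₂_le g hg

theorem one_le_of_adj_of_eq_zero {a v : V} (hg : g ∈ graphD G (({a} : Set V).indicator 1))
    (ha : g a = 0) (hav : G.Adj a v) : 1 ≤ g v := by
  simpa [hav.ne.symm, ha] using hg a v hav

theorem degree_le_tsum_rpow_of_eq_zero (hp : 0 < p) {a : V} [Fintype (G.neighborSet a)]
    (hg : g ∈ graphD G (({a} : Set V).indicator 1)) (ha : g a = 0) :
    (G.degree a : ℝ≥0∞) ≤ ∑' v, g v ^ p :=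
  calc (G.degree a : ℝ≥0∞) = ∑ v ∈ G.neighborFinset a, 1 := by simp
    _ ≤ ∑ v ∈ G.neighborFinset a, g v ^ p := Finset.sum_le_sum fun v hv ↦
        ENNReal.one_le_rpow (one_le_of_adj_of_eq_zero hg ha ((mem_neighborFinset G a v).1 hv)) hp
    _ ≤ ∑' v, g v ^ p := ENNReal.sum_le_tsum _

variable (a : V)

theorem closedNeighborhood_indicator_mem_graphD :
    (insert a (G.neighborSet a)).indicator (fun _ ↦ 2⁻¹) ∈
      graphD G (({a} : Set V).indicator 1) := by
  classical
  intro x y hxy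
  by_cases hxa : x = a ∨ y = a
  · have hx : x ∈ insert a (G.neighborSet a) := by
      rcases hxa with rfl | rfl <;> simp [hxy.symm]
    have hy : y ∈ insert a (G.neighborSet a) := by
      rcases hxa with rfl | rfl <;> simp [hxy]
    have hdiff : |({a} : Set V).indicator 1 x - ({a} : Set V).indicator 1 y| ≤ (1 : ℝ) := by
      simp only [Set.indicator_apply, Set.mem_singleton_iff, Pi.one_apply]
      split_ifs <;> norm_num
    rw [Set.indicator_of_mem hx, Set.indicator_of_mem hy, ENNReal.inv_two_add_inv_two]
    exact ENNReal.ofReal_le_one.2 hdiff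
  · push Not at hxa
    simp [hxa.1, hxa.2]

theorem graphEnergy_singleton_indicator_le [Fintype (G.neighborSet a)] (hp : 0 < p) :
    graphEnergy G p (({a} : Set V).indicator 1) ≤ (G.degree a + 1) * 2⁻¹ ^ p := by
  refine (graphEnergy_le_tsum (closedNeighborhood_indicator_mem_graphD a)).trans_eq ?_
  have hrpow := Set.indicator_comp_of_zero (g := (· ^ p)) (ENNReal.zero_rpow_of_pos hp)
    (s := insert a (G.neighborSet a)) (f := fun _ ↦ (2⁻¹ : ℝ≥0∞))
  simp only [Function.comp_def] at hrpow
  rw [← hrpow, ← tsum_subtype, ENNReal.tsum_set_const,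
    Set.encard_insert_of_notMem G.notMem_neighborSet_self, ← G.coe_neighborFinset,
    Set.encard_coe_eq_coe_finsetCard]
  simp [add_comm]

end GraphSob

/-- On a locally finite connected graph with at least two vertices, property L2 fails
for the `D`-structure `D[u] = { g : |u(x) - u(y)| ≤ g(x) + g(y) for x ∼ y }`:
there are a function `u` in the Sobolev class `S^p(V)` (i.e. with finite energy) and a
vertex `x` — so that `u` is trivially constant on `B = {x}` — such that the minimal
pseudo-gradient `Du` (any `g ∈ D[u]` of minimal `ℓ^p`-energy) satisfies `Du(x) > 0`. -/
theorem graph_D_structure_fails_L2 {V : Type*} (G : SimpleGraph V)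
    (hconn : G.Connected) (hlf : ∀ v : V, (G.neighborSet v).Finite)
    (htwo : Nontrivial V) (p : ℝ) (hp : 1 < p) :
    ∃ (u : V → ℝ) (x : V), graphEnergy G p u < ∞ ∧
      ∀ g ∈ graphD G u, (∑' y : V, g y ^ p) = graphEnergy G p u → 0 < g x := by
  obtain ⟨a⟩ := hconn.nonempty
  have : Fintype (G.neighborSet a) := (hlf a).fintype
  have hp0 : 0 < p := one_pos.trans hp
  have henergy_lt := (graphEnergy_singleton_indicator_le a hp0).trans_lt
    (ENNReal.add_one_mul_inv_two_rpow_lt (hconn.preconnected.degree_pos_of_nontrivial a) hp)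
  refine ⟨({a} : Set V).indicator 1, a, henergy_lt.trans (ENNReal.natCast_lt_top _),
    fun g hg hmin ↦ pos_iff_ne_zero.2 fun hga ↦ ?_⟩
  exact (degree_le_tsum_rpow_of_eq_zero hp0 hg hga).not_gt (hmin ▸ henergy_lt)
end
end
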